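/- Suppose (F*, φ*) is a saddle point of J(F, φ) := f1(G_F) + f2(G_F, φ), where G_F(t; z) = z + tF(z, t), f1(G) = E[L(dG(U;Z)/dt)] and f2(G, φ) = E[φ(G(1;Z))] − E[φ(Y)], with the supremum over all Lipschitz φ, and suppose f2(G_{F*}, φ + φ*) = f2(G_{F*}, φ) + f2(G_{F*}, φ*) for all Lipschitz φ. Then inf_F sup_{φ Lip} J(F, φ) = f1(G_{F*}) and W₁((G_{F*}(1;·))_# ρ_a, ρ_b) = 0, i.e. F* solves the constrained problem inf { f1(G_F) : (G_F(1;·))_# ρ_a = ρ_b } whenever Wasserstein-1 distance zero implies equality of pushforward and target laws. -/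

import Mathlib

/-!
At a saddle point the critic gap `f2(G_{F*}, ·)` vanishes on every Lipschitz `φ`: by
additivity, maximality of `φ*` gives `f2(G_{F*}, φ) ≤ 0`, and applying this to `-φ` gives
equality. Hence `sup_φ J(F*, φ) = f1(G_{F*})`, which by minimality of `F*` is the inf-sup
value, and every 1-Lipschitz critic sees zero discrepancy, so `W₁ = 0`. Conversely, an `F`
whose pushforward equals `ρ_b` also has zero gap, so `sup_φ J(F, φ) = f1(G_F)` and
minimality of `F*` yields `f1(G_{F*}) ≤ f1(G_F)`.
-/

open MeasureTheory ProbabilityTheory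
open scoped ProbabilityTheory NNReal

noncomputable section

variable {d : ℕ}

/-- The reparameterized trajectory `G_F(t; z) = z + t F(z, t)`. -/
def GF (F : EuclideanSpace ℝ (Fin d) → ℝ → EuclideanSpace ℝ (Fin d))
    (t : ℝ) (z : EuclideanSpace ℝ (Fin d)) : EuclideanSpace ℝ (Fin d) :=
  z + t • F z t

/-- The Kantorovich–Rubinstein dual functional `W₁`. -/
def W1 (μ ν : Measure (EuclideanSpace ℝ (Fin d))) : ℝ :=
  sSup {r : ℝ | ∃ φ : EuclideanSpace ℝ (Fin d) → ℝ, LipschitzWith 1 φ ∧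
    r = ∫ x, φ x ∂μ - ∫ x, φ x ∂ν}

theorem sSup_lipschitz_eq_of_forall {X : Type*} [PseudoEMetricSpace X] {g : (X → ℝ) → ℝ}
    {c : ℝ} (h : ∀ φ, (∃ K : ℝ≥0, LipschitzWith K φ) → g φ = c) :
    sSup {r : ℝ | ∃ φ, (∃ K : ℝ≥0, LipschitzWith K φ) ∧ r = g φ} = c := by
  have hset : {r : ℝ | ∃ φ, (∃ K : ℝ≥0, LipschitzWith K φ) ∧ r = g φ} = {c} := by
    ext r
    constructor
    · rintro ⟨φ, hφ, rfl⟩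
      exact h φ hφ
    · rintro rfl
      exact ⟨fun _ => 0, ⟨0, LipschitzWith.const 0⟩, (h _ ⟨0, LipschitzWith.const 0⟩).symm⟩
  rw [hset, csSup_singleton]

theorem eq_zero_of_forall_le_of_add_of_neg {X : Type*} [PseudoEMetricSpace X]
    {g : (X → ℝ) → ℝ} {φs : X → ℝ} (hφs : ∃ K : ℝ≥0, LipschitzWith K φs)
    (hmax : ∀ φ, (∃ K : ℝ≥0, LipschitzWith K φ) → g φ ≤ g φs)
    (hadd : ∀ φ, (∃ K : ℝ≥0, LipschitzWith K φ) → g (φ + φs) = g φ + g φs)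
    (hneg : ∀ φ, g (-φ) = -g φ) {φ : X → ℝ} (hφ : ∃ K : ℝ≥0, LipschitzWith K φ) :
    g φ = 0 := by
  have nonpos : ∀ ψ, (∃ K : ℝ≥0, LipschitzWith K ψ) → g ψ ≤ 0 := by
    rintro ψ ⟨K, hK⟩
    obtain ⟨Ks, hKs⟩ := hφs
    have h := hmax (ψ + φs) ⟨K + Ks, hK.add hKs⟩
    rw [hadd ψ ⟨K, hK⟩] at h
    linarith
  obtain ⟨K, hK⟩ := hφ
  have h₁ := nonpos φ ⟨K, hK⟩
  have h₂ := nonpos (-φ) ⟨K, hK.neg⟩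
  rw [hneg] at h₂
  linarith

theorem integral_map_map_eq_integral_comp {Ω X Y : Type*} [MeasurableSpace Ω]
    [MeasurableSpace X] [TopologicalSpace Y] [MeasurableSpace Y] [OpensMeasurableSpace Y]
    {P : Measure Ω} {Z : Ω → X} (hZ : AEMeasurable Z P) {G : X → Y}
    (hG : AEMeasurable G (P.map Z)) {φ : Y → ℝ} (hφ : Continuous φ) :
    ∫ y, φ y ∂((P.map Z).map G) = ∫ ω, φ (G (Z ω)) ∂P := by
  rw [integral_map hG hφ.aestronglyMeasurable]
  exact integral_map hZ (hφ.measurable.comp_aemeasurable hG).aestronglyMeasurable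

theorem W1_eq_zero_of_forall {μ ν : Measure (EuclideanSpace ℝ (Fin d))}
    (h : ∀ φ : EuclideanSpace ℝ (Fin d) → ℝ, LipschitzWith 1 φ →
      ∫ x, φ x ∂μ - ∫ x, φ x ∂ν = 0) :
    W1 μ ν = 0 := by
  have hset : {r : ℝ | ∃ φ : EuclideanSpace ℝ (Fin d) → ℝ, LipschitzWith 1 φ ∧
      r = ∫ x, φ x ∂μ - ∫ x, φ x ∂ν} = {0} := by
    ext r
    constructor
    · rintro ⟨φ, hφ, rfl⟩
      exact h φ hφ
    · rintro rfl
      exact ⟨fun _ => 0, (LipschitzWith.const 0).weaken zero_le_one, by simp⟩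
  rw [W1, hset, csSup_singleton]

/- Constant critics make the defining set unbounded above, and `sSup` of such a set of
reals is `0`. -/
theorem W1_zero_left (ν : Measure (EuclideanSpace ℝ (Fin d))) [IsProbabilityMeasure ν] :
    W1 0 ν = 0 := by
  refine Real.sSup_of_not_bddAbove fun ⟨b, hb⟩ => ?_
  have := hb ⟨fun _ => -(b + 1), (LipschitzWith.const _).weaken zero_le_one, rfl⟩
  simp only [integral_const, measureReal_zero, Pi.zero_apply, smul_eq_mul, zero_mul,
    probReal_univ, one_mul] at this
  linarith

theorem stmt_5_general {Ω : Type*} [MeasureSpace Ω] [IsProbabilityMeasure (ℙ : Measure Ω)]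
    (Z Y : Ω → EuclideanSpace ℝ (Fin d))
    (hZ : Measurable Z) (hY : Measurable Y)
    (f1 : (EuclideanSpace ℝ (Fin d) → ℝ → EuclideanSpace ℝ (Fin d)) → ℝ)
    (f2 : (EuclideanSpace ℝ (Fin d) → ℝ → EuclideanSpace ℝ (Fin d)) →
      (EuclideanSpace ℝ (Fin d) → ℝ) → ℝ)
    (hf2 : ∀ F φ, f2 F φ =
      (∫ ω, φ (GF F 1 (Z ω)) ∂(ℙ : Measure Ω)) - ∫ ω, φ (Y ω) ∂(ℙ : Measure Ω))
    (J : (EuclideanSpace ℝ (Fin d) → ℝ → EuclideanSpace ℝ (Fin d)) →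
      (EuclideanSpace ℝ (Fin d) → ℝ) → ℝ)
    (hJ : ∀ F φ, J F φ = f1 F + f2 F φ)
    (Fs : EuclideanSpace ℝ (Fin d) → ℝ → EuclideanSpace ℝ (Fin d))
    (φs : EuclideanSpace ℝ (Fin d) → ℝ) (hφs : ∃ K : ℝ≥0, LipschitzWith K φs)
    -- φ* maximizes J(F*, ·) over Lipschitz functions
    (hmax : ∀ φ : EuclideanSpace ℝ (Fin d) → ℝ,
      (∃ K : ℝ≥0, LipschitzWith K φ) → J Fs φ ≤ J Fs φs)
    -- F* minimizes F ↦ sup_{φ Lipschitz} J(F, φ)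
    (hmin : ∀ F, sSup {r : ℝ | ∃ φ, (∃ K : ℝ≥0, LipschitzWith K φ) ∧ r = J Fs φ} ≤
      sSup {r : ℝ | ∃ φ, (∃ K : ℝ≥0, LipschitzWith K φ) ∧ r = J F φ})
    -- additivity of f2(G_{F*}, ·) against φ* on Lipschitz functions
    (hadd : ∀ φ : EuclideanSpace ℝ (Fin d) → ℝ, (∃ K : ℝ≥0, LipschitzWith K φ) →
      f2 Fs (φ + φs) = f2 Fs φ + f2 Fs φs) :
    -- (1) inf over F of sup over Lipschitz φ of J equals f1(G_{F*})
    sInf {s : ℝ | ∃ F, s = sSup {r : ℝ | ∃ φ,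
        (∃ K : ℝ≥0, LipschitzWith K φ) ∧ r = J F φ}} = f1 Fs ∧
    -- (2) W₁((G_{F*}(1;·))_# ρ_a, ρ_b) = 0
    W1 (Measure.map (GF Fs 1) (Measure.map Z (ℙ : Measure Ω)))
      (Measure.map Y (ℙ : Measure Ω)) = 0 ∧
    -- (3) F* solves the constrained problem whenever W₁ = 0 forces equality of laws
    ((∀ μ ν : Measure (EuclideanSpace ℝ (Fin d)), W1 μ ν = 0 → μ = ν) →
      Measure.map (GF Fs 1) (Measure.map Z (ℙ : Measure Ω)) =
        Measure.map Y (ℙ : Measure Ω) ∧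
      ∀ F, Measure.map (GF F 1) (Measure.map Z (ℙ : Measure Ω)) =
        Measure.map Y (ℙ : Measure Ω) → f1 Fs ≤ f1 F) := by
  set P := (ℙ : Measure Ω)
  have : IsProbabilityMeasure (P.map Y) := Measure.isProbabilityMeasure_map hY.aemeasurable
  have f2_eq_integral_map : ∀ F φ, (∃ K : ℝ≥0, LipschitzWith K φ) →
      AEMeasurable (GF F 1) (P.map Z) →
      f2 F φ = ∫ x, φ x ∂((P.map Z).map (GF F 1)) - ∫ x, φ x ∂(P.map Y) := by
    rintro F φ ⟨K, hK⟩ hG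
    rw [hf2, integral_map_map_eq_integral_comp hZ.aemeasurable hG hK.continuous,
      integral_map hY.aemeasurable hK.continuous.aestronglyMeasurable]
  have gap_eq_zero : ∀ φ, (∃ K : ℝ≥0, LipschitzWith K φ) → f2 Fs φ = 0 :=
    fun φ => eq_zero_of_forall_le_of_add_of_neg hφs
      (fun ψ hψ => by simpa only [hJ, add_le_add_iff_left] using hmax ψ hψ) hadd
      (fun ψ => by simp only [hf2, Pi.neg_apply, integral_neg]; ring)
  have sup_Fs : sSup {r : ℝ | ∃ φ, (∃ K : ℝ≥0, LipschitzWith K φ) ∧ r = J Fs φ} = f1 Fs :=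
    sSup_lipschitz_eq_of_forall fun φ hφ => by rw [hJ, gap_eq_zero φ hφ, add_zero]
  have hW1 : W1 ((P.map Z).map (GF Fs 1)) (P.map Y) = 0 := by
    by_cases hG : AEMeasurable (GF Fs 1) (P.map Z)
    · exact W1_eq_zero_of_forall fun φ hφ =>
        (f2_eq_integral_map Fs φ ⟨1, hφ⟩ hG).symm.trans (gap_eq_zero φ ⟨1, hφ⟩)
    · rw [Measure.map_of_not_aemeasurable hG]
      exact W1_zero_left _
  refine ⟨IsLeast.csInf_eq ⟨⟨Fs, sup_Fs.symm⟩, ?_⟩, hW1, fun hlaw => ⟨hlaw _ _ hW1, ?_⟩⟩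
  · rintro _ ⟨F, rfl⟩
    exact sup_Fs ▸ hmin F
  · intro F hF
    have hG : AEMeasurable (GF F 1) (P.map Z) :=
      .of_map_ne_zero (hF ▸ IsProbabilityMeasure.ne_zero _)
    have sup_F : sSup {r : ℝ | ∃ φ, (∃ K : ℝ≥0, LipschitzWith K φ) ∧ r = J F φ} = f1 F :=
      sSup_lipschitz_eq_of_forall fun φ hφ => by
        rw [hJ, f2_eq_integral_map F φ hφ hG, hF, sub_self, add_zero]
    exact sup_Fs ▸ sup_F ▸ hmin F

/-- Theorem 1 of the paper, consistency of the min-max formulation: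
if `(F*, φ*)` is a saddle point of `J(F, φ) = f1(G_F) + f2(G_F, φ)` (sup over Lipschitz
critics `φ`), and `f2(G_{F*}, ·)` is additive against `φ*` on Lipschitz functions, then
`inf_F sup_φ J(F,φ) = f1(G_{F*})`, the Wasserstein-1 distance between
`(G_{F*}(1;·))_# ρ_a` and `ρ_b` vanishes, and (whenever vanishing `W₁` implies equality
of laws) `F*` solves the constrained problem `inf {f1(G_F) : (G_F(1;·))_# ρ_a = ρ_b}`. -/
theorem stmt_5 {Ω : Type*} [MeasureSpace Ω] [IsProbabilityMeasure (ℙ : Measure Ω)]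
    (Z Y : Ω → EuclideanSpace ℝ (Fin d)) (U : Ω → ℝ)
    (hZ : Measurable Z) (hY : Measurable Y) (hU : Measurable U)
    (hUlaw : Measure.map U (ℙ : Measure Ω) = (volume : Measure ℝ).restrict (Set.Icc 0 1))
    (L : EuclideanSpace ℝ (Fin d) → ℝ)
    (f1 : (EuclideanSpace ℝ (Fin d) → ℝ → EuclideanSpace ℝ (Fin d)) → ℝ)
    (hf1 : ∀ F, f1 F = ∫ ω, L (deriv (fun t => GF F t (Z ω)) (U ω)) ∂(ℙ : Measure Ω))
    (f2 : (EuclideanSpace ℝ (Fin d) → ℝ → EuclideanSpace ℝ (Fin d)) →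
      (EuclideanSpace ℝ (Fin d) → ℝ) → ℝ)
    (hf2 : ∀ F φ, f2 F φ =
      (∫ ω, φ (GF F 1 (Z ω)) ∂(ℙ : Measure Ω)) - ∫ ω, φ (Y ω) ∂(ℙ : Measure Ω))
    (J : (EuclideanSpace ℝ (Fin d) → ℝ → EuclideanSpace ℝ (Fin d)) →
      (EuclideanSpace ℝ (Fin d) → ℝ) → ℝ)
    (hJ : ∀ F φ, J F φ = f1 F + f2 F φ)
    (Fs : EuclideanSpace ℝ (Fin d) → ℝ → EuclideanSpace ℝ (Fin d))
    (φs : EuclideanSpace ℝ (Fin d) → ℝ) (hφs : ∃ K : ℝ≥0, LipschitzWith K φs)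
    -- φ* maximizes J(F*, ·) over Lipschitz functions
    (hmax : ∀ φ : EuclideanSpace ℝ (Fin d) → ℝ,
      (∃ K : ℝ≥0, LipschitzWith K φ) → J Fs φ ≤ J Fs φs)
    -- F* minimizes F ↦ sup_{φ Lipschitz} J(F, φ)
    (hmin : ∀ F, sSup {r : ℝ | ∃ φ, (∃ K : ℝ≥0, LipschitzWith K φ) ∧ r = J Fs φ} ≤
      sSup {r : ℝ | ∃ φ, (∃ K : ℝ≥0, LipschitzWith K φ) ∧ r = J F φ})
    -- additivity of f2(G_{F*}, ·) against φ* on Lipschitz functions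
    (hadd : ∀ φ : EuclideanSpace ℝ (Fin d) → ℝ, (∃ K : ℝ≥0, LipschitzWith K φ) →
      f2 Fs (φ + φs) = f2 Fs φ + f2 Fs φs) :
    -- (1) inf over F of sup over Lipschitz φ of J equals f1(G_{F*})
    sInf {s : ℝ | ∃ F, s = sSup {r : ℝ | ∃ φ,
        (∃ K : ℝ≥0, LipschitzWith K φ) ∧ r = J F φ}} = f1 Fs ∧
    -- (2) W₁((G_{F*}(1;·))_# ρ_a, ρ_b) = 0
    W1 (Measure.map (GF Fs 1) (Measure.map Z (ℙ : Measure Ω)))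
      (Measure.map Y (ℙ : Measure Ω)) = 0 ∧
    -- (3) F* solves the constrained problem whenever W₁ = 0 forces equality of laws
    ((∀ μ ν : Measure (EuclideanSpace ℝ (Fin d)), W1 μ ν = 0 → μ = ν) →
      Measure.map (GF Fs 1) (Measure.map Z (ℙ : Measure Ω)) =
        Measure.map Y (ℙ : Measure Ω) ∧
      ∀ F, Measure.map (GF F 1) (Measure.map Z (ℙ : Measure Ω)) =
        Measure.map Y (ℙ : Measure Ω) → f1 Fs ≤ f1 F) :=
  stmt_5_general Z Y hZ hY f1 f2 hf2 J hJ Fs φs hφs hmax hmin hadd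

end
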